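/- Let n ≥ 3, let 0 < p < p' < ∞ and assume 1 < p'. Then there exists a Hermitian n×n complex matrix A such that for no natural number K and no Hermitian n×n complex matrices B_1, …, B_K does the identity |A ⊗ₖ 1 − 1 ⊗ₖ Aᵀ|^{p'} = Σ_{k=1}^K |B_k ⊗ₖ 1 − 1 ⊗ₖ B_kᵀ|^p hold. (For dim H ≥ 3 and p < p' with p' > 1, C_p(H) does not contain C_{p'}(H).) -/

import Mathlib

/-!
Compare diagonal entries. If `A = diag(0, 1, 2, 0, …)` then the `((i, j), (i, j))` entry of
`|A ⊗ₖ 1 - 1 ⊗ₖ Aᵀ|^p'` is `|c i - c j|^p'` with `c = (0, 1, 2, 0, …)`. For Hermitian `B` with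
eigenvalues `β` and eigenvector unitary `U`, the same entry of `|B ⊗ₖ 1 - 1 ⊗ₖ Bᵀ|^p` is the
transport cost `∑ a b, |U i a|² |U j b|² |β a - β b|^p`: the expected `p`-th power distance between
independent draws from the rows `i` and `j` of the unistochastic matrix `(|U i a|²)`. Drawing
the rows `i, j, l` independently couples the three costs, so Minkowski's inequality (or, for
`p ≤ 1`, subadditivity of `x ↦ x^p`) makes `(∑ₖ costₖ)^(1 / max p 1)` satisfy the triangle
inequality. At the points `0, 1, 2` this reads `2^(p' / max p 1) ≤ 2`, which fails since
`p' > max p 1`.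
-/

open Kronecker Matrix
open scoped ComplexOrder

/-- `costOp p A` is the cost operator `|A ⊗ₖ 1 - 1 ⊗ₖ Aᵀ|^p`, where `|·|^p` is the
functional calculus applied with `x ↦ |x| ^ p` (real rpow). -/
noncomputable def costOp {n : ℕ} (p : ℝ) (A : Matrix (Fin n) (Fin n) ℂ) :
    Matrix (Fin n × Fin n) (Fin n × Fin n) ℂ :=
  cfc (fun x : ℝ => |x| ^ p)
    (A ⊗ₖ (1 : Matrix (Fin n) (Fin n) ℂ) - (1 : Matrix (Fin n) (Fin n) ℂ) ⊗ₖ Aᵀ)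

namespace Real

variable {ι : Type*} (s : Finset ι) {p : ℝ} {μ X Y : ι → ℝ}

theorem sum_mul_rpow_add_le_of_le_one (hp : 0 ≤ p) (hp1 : p ≤ 1) (hμ : ∀ i ∈ s, 0 ≤ μ i)
    (hX : ∀ i ∈ s, 0 ≤ X i) (hY : ∀ i ∈ s, 0 ≤ Y i) :
    ∑ i ∈ s, μ i * (X i + Y i) ^ p ≤ ∑ i ∈ s, μ i * X i ^ p + ∑ i ∈ s, μ i * Y i ^ p := by
  rw [← Finset.sum_add_distrib]
  refine Finset.sum_le_sum fun i hi => ?_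
  rw [← mul_add]
  exact mul_le_mul_of_nonneg_left (rpow_add_le_add_rpow (hX i hi) (hY i hi) hp hp1) (hμ i hi)

theorem weighted_Lp_add_le_of_nonneg (hp : 1 ≤ p) (hμ : ∀ i ∈ s, 0 ≤ μ i)
    (hX : ∀ i ∈ s, 0 ≤ X i) (hY : ∀ i ∈ s, 0 ≤ Y i) :
    (∑ i ∈ s, μ i * (X i + Y i) ^ p) ^ (1 / p) ≤
      (∑ i ∈ s, μ i * X i ^ p) ^ (1 / p) + (∑ i ∈ s, μ i * Y i ^ p) ^ (1 / p) := by
  have absorb : ∀ i ∈ s, ∀ x, 0 ≤ x → (μ i ^ (1 / p) * x) ^ p = μ i * x ^ p := fun i hi x hx => by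
    rw [mul_rpow (rpow_nonneg (hμ i hi) _) hx, ← rpow_mul (hμ i hi),
      one_div_mul_cancel (by positivity), rpow_one]
  have h := Lp_add_le_of_nonneg (s := s) (f := fun i => μ i ^ (1 / p) * X i)
    (g := fun i => μ i ^ (1 / p) * Y i) hp
    (fun i hi => mul_nonneg (rpow_nonneg (hμ i hi) _) (hX i hi))
    (fun i hi => mul_nonneg (rpow_nonneg (hμ i hi) _) (hY i hi))
  simp only [← mul_add] at h
  rwa [Finset.sum_congr rfl fun i hi => absorb i hi _ (add_nonneg (hX i hi) (hY i hi)),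
    Finset.sum_congr rfl fun i hi => absorb i hi _ (hX i hi),
    Finset.sum_congr rfl fun i hi => absorb i hi _ (hY i hi)] at h

theorem weighted_rpow_sum_le_add_of_le_add {Z : ι → ℝ} (hp : 0 < p) (hμ : ∀ i ∈ s, 0 ≤ μ i)
    (hX : ∀ i ∈ s, 0 ≤ X i) (hY : ∀ i ∈ s, 0 ≤ Y i) (hZ : ∀ i ∈ s, 0 ≤ Z i)
    (hZXY : ∀ i ∈ s, Z i ≤ X i + Y i) :
    (∑ i ∈ s, μ i * Z i ^ p) ^ (1 / max p 1) ≤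
      (∑ i ∈ s, μ i * X i ^ p) ^ (1 / max p 1) + (∑ i ∈ s, μ i * Y i ^ p) ^ (1 / max p 1) := by
  have hmono : ∑ i ∈ s, μ i * Z i ^ p ≤ ∑ i ∈ s, μ i * (X i + Y i) ^ p :=
    Finset.sum_le_sum fun i hi =>
      mul_le_mul_of_nonneg_left (rpow_le_rpow (hZ i hi) (hZXY i hi) hp.le) (hμ i hi)
  rcases le_total p 1 with hp1 | hp1
  · simp only [max_eq_right hp1, div_one, rpow_one]
    exact hmono.trans (sum_mul_rpow_add_le_of_le_one s hp.le hp1 hμ hX hY)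
  · rw [max_eq_left hp1]
    refine le_trans ?_ (weighted_Lp_add_le_of_nonneg s hp1 hμ hX hY)
    have hZ₀ : 0 ≤ ∑ i ∈ s, μ i * Z i ^ p :=
      Finset.sum_nonneg fun i hi => mul_nonneg (hμ i hi) (rpow_nonneg (hZ i hi) _)
    exact rpow_le_rpow hZ₀ hmono (by positivity)

end Real

section TransportCost

variable {m ι : Type*} [Fintype m] [Fintype ι]

noncomputable def transportCost (p : ℝ) (w : m → m → ℝ) (β : m → ℝ) (i j : m) : ℝ :=
  ∑ a, ∑ b, w i a * w j b * |β a - β b| ^ p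

theorem sum_transportCost_triangle {p : ℝ} (hp : 0 < p) (w : ι → m → m → ℝ)
    (hw₀ : ∀ k i a, 0 ≤ w k i a) (hw₁ : ∀ k i, ∑ a, w k i a = 1) (β : ι → m → ℝ) (i j l : m) :
    (∑ k, transportCost p (w k) (β k) i l) ^ (1 / max p 1) ≤
      (∑ k, transportCost p (w k) (β k) i j) ^ (1 / max p 1) +
        (∑ k, transportCost p (w k) (β k) j l) ^ (1 / max p 1) := by
  let μ : ι × m × m × m → ℝ := fun x => w x.1 i x.2.1 * w x.1 j x.2.2.1 * w x.1 l x.2.2.2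
  have hXY := Real.weighted_rpow_sum_le_add_of_le_add Finset.univ (μ := μ)
    (X := fun x => |β x.1 x.2.1 - β x.1 x.2.2.1|) (Y := fun x => |β x.1 x.2.2.1 - β x.1 x.2.2.2|)
    (Z := fun x => |β x.1 x.2.1 - β x.1 x.2.2.2|) hp
    (fun x _ => mul_nonneg (mul_nonneg (hw₀ _ _ _) (hw₀ _ _ _)) (hw₀ _ _ _))
    (fun _ _ => abs_nonneg _) (fun _ _ => abs_nonneg _) (fun _ _ => abs_nonneg _)
    (fun _ _ => abs_sub_le _ _ _)
  have weight_one : ∀ k x (c : ℝ), c = ∑ a, w k x a * c := fun k x c => by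
    rw [← Finset.sum_mul, hw₁, one_mul]
  convert hXY using 3 <;> simp only [Fintype.sum_prod_type, transportCost, μ] <;>
    refine Finset.sum_congr rfl fun k _ => ?_
  · refine Finset.sum_congr rfl fun a _ => ?_
    rw [Finset.sum_comm]
    refine Finset.sum_congr rfl fun d _ => ?_
    refine (weight_one k j _).trans ?_
    exact Finset.sum_congr rfl fun b _ => by ring
  · refine Finset.sum_congr rfl fun a _ => Finset.sum_congr rfl fun b _ => ?_
    refine (weight_one k l _).trans ?_
    exact Finset.sum_congr rfl fun d _ => by ring
  · refine (weight_one k i _).trans (Finset.sum_congr rfl fun a _ => ?_)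
    simp only [Finset.mul_sum]
    exact Finset.sum_congr rfl fun b _ => Finset.sum_congr rfl fun d _ => by ring

end TransportCost

namespace Matrix

theorem diagonal_kronecker_one_sub_one_kronecker_diagonal {m α : Type*} [DecidableEq m] [Ring α]
    (v : m → α) :
    diagonal v ⊗ₖ (1 : Matrix m m α) - (1 : Matrix m m α) ⊗ₖ diagonal v =
      diagonal fun x : m × m => v x.1 - v x.2 := by
  rw [← diagonal_one, diagonal_kronecker_diagonal, diagonal_kronecker_diagonal, diagonal_sub]
  simp

variable {m : Type*} [Fintype m] [DecidableEq m]

theorem mul_diagonal_mul_star_apply_self (W : Matrix m m ℂ) (v : m → ℝ) (x : m) :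
    (W * diagonal (fun y => (v y : ℂ)) * star W) x x =
      ((∑ y, Complex.normSq (W x y) * v y : ℝ) : ℂ) := by
  rw [mul_apply]
  simp only [mul_diagonal, star_apply, Complex.ofReal_sum, Complex.ofReal_mul,
    Complex.normSq_eq_conj_mul_self, RCLike.star_def]
  exact Finset.sum_congr rfl fun y _ => by ring

theorem sum_normSq_apply_of_mem_unitaryGroup {U : Matrix m m ℂ} (hU : U ∈ unitaryGroup m ℂ)
    (x : m) : ∑ y, Complex.normSq (U x y) = 1 := by
  have h := mul_diagonal_mul_star_apply_self U 1 x
  simp only [Pi.one_apply, Complex.ofReal_one, diagonal_one,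
    Unitary.mul_star_self_of_mem hU, one_apply_eq, mul_one] at h
  exact_mod_cast h.symm

-- `f` need not be continuous: on the finite spectrum it agrees with an interpolating polynomial.
open Polynomial in
theorem cfc_unitary_mul_diagonal_mul_star (U : unitaryGroup m ℂ) (d : m → ℝ) (f : ℝ → ℝ) :
    cfc f ((U : Matrix m m ℂ) * diagonal (fun i => (d i : ℂ)) * star (U : Matrix m m ℂ)) =
      U * diagonal (fun i => (f (d i) : ℂ)) * star (U : Matrix m m ℂ) := by
  classical
  let Φ : (m → ℝ) →ₐ[ℝ] Matrix m m ℂ := (Unitary.conjStarAlgAut ℝ _ U).toAlgEquiv.toAlgHom.comp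
    ((diagonalAlgHom ℝ).comp (AlgHom.compLeft (Algebra.ofId ℝ ℂ) m))
  have hΦ : ∀ x, Φ x = U * diagonal (fun i => (x i : ℂ)) * star (U : Matrix m m ℂ) := fun x => rfl
  have hsa : IsSelfAdjoint (Φ d) := by
    rw [hΦ]
    refine IsSelfAdjoint.conjugate ?_ _
    simp [IsSelfAdjoint, star_eq_conjTranspose, diagonal_conjTranspose, Pi.star_def]
  let q : ℝ[X] := Lagrange.interpolate (Finset.univ.image d) id f
  have hq : ∀ i, q.eval (d i) = f (d i) := fun i =>
    Lagrange.eval_interpolate_at_node f (Set.injOn_id _)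
      (Finset.mem_image_of_mem d (Finset.mem_univ i))
  have hspec : spectrum ℝ (Φ d) ⊆ Set.range d := by
    refine (AlgHom.spectrum_apply_subset Φ d).trans ?_
    rw [Pi.spectrum_eq]
    refine Set.iUnion_subset fun i => ?_
    rw [show d i = algebraMap ℝ ℝ (d i) from rfl, spectrum.scalar_eq]
    exact Set.singleton_subset_iff.mpr ⟨i, rfl⟩
  rw [← hΦ, ← hΦ]
  calc cfc f (Φ d) = cfc q.eval (Φ d) := cfc_congr fun x hx => by
          obtain ⟨i, rfl⟩ := hspec hx
          exact (hq i).symm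
    _ = Φ (aeval d q) := by rw [cfc_polynomial q _ hsa, aeval_algHom_apply]
    _ = Φ (fun i => f (d i)) := by
          congr 1
          ext i
          simp [hq]

namespace IsHermitian

variable {B : Matrix m m ℂ} (hB : B.IsHermitian)

noncomputable def kroneckerConjEigenvectorUnitary : unitaryGroup (m × m) ℂ :=
  ⟨(hB.eigenvectorUnitary : Matrix m m ℂ) ⊗ₖ (hB.eigenvectorUnitary : Matrix m m ℂ).map star,
    kronecker_mem_unitary (SetLike.coe_mem _)
      (map_star_mem_unitaryGroup_iff.mpr (SetLike.coe_mem _))⟩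

theorem kronecker_one_sub_one_kronecker_transpose :
    B ⊗ₖ (1 : Matrix m m ℂ) - (1 : Matrix m m ℂ) ⊗ₖ Bᵀ =
      (hB.kroneckerConjEigenvectorUnitary : Matrix (m × m) (m × m) ℂ) *
        diagonal (fun x : m × m => ((hB.eigenvalues x.1 - hB.eigenvalues x.2 : ℝ) : ℂ)) *
          star (hB.kroneckerConjEigenvectorUnitary : Matrix (m × m) (m × m) ℂ) := by
  set U : Matrix m m ℂ := (hB.eigenvectorUnitary : Matrix m m ℂ)
  set D : Matrix m m ℂ := diagonal (fun a => (hB.eigenvalues a : ℂ))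
  have hU : U * star U = 1 := Unitary.mul_star_self_of_mem (SetLike.coe_mem _)
  have hŪ : U.map star * star (U.map star) = 1 :=
    Unitary.mul_star_self_of_mem (map_star_mem_unitaryGroup_iff.mpr (SetLike.coe_mem _))
  have hB' : B = U * D * star U := hB.spectral_theorem
  have hBt : Bᵀ = U.map star * D * star (U.map star) := by
    have hŪ' : star (U.map star) = Uᵀ := by ext; simp
    have hUt : (star U)ᵀ = U.map star := by ext; simp
    rw [hB', transpose_mul, transpose_mul, diagonal_transpose, hUt, hŪ', Matrix.mul_assoc]
  have hD : D ⊗ₖ (1 : Matrix m m ℂ) - (1 : Matrix m m ℂ) ⊗ₖ D =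
      diagonal (fun x : m × m => ((hB.eigenvalues x.1 - hB.eigenvalues x.2 : ℝ) : ℂ)) := by
    rw [diagonal_kronecker_one_sub_one_kronecker_diagonal]
    push_cast
    rfl
  have hW : (hB.kroneckerConjEigenvectorUnitary : Matrix (m × m) (m × m) ℂ) = U ⊗ₖ U.map star :=
    rfl
  have hW' : star (U ⊗ₖ U.map star) = star U ⊗ₖ star (U.map star) := by
    simp only [star_eq_conjTranspose, conjTranspose_kronecker]
  rw [← hD, hW, hW', Matrix.mul_sub, Matrix.sub_mul, ← mul_kronecker_mul, ← mul_kronecker_mul,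
    ← mul_kronecker_mul, ← mul_kronecker_mul, Matrix.mul_one, Matrix.mul_one, hU, hŪ, ← hB', ← hBt]

theorem cfc_kronecker_one_sub_one_kronecker_transpose_apply_self (f : ℝ → ℝ) (i j : m) :
    cfc f (B ⊗ₖ (1 : Matrix m m ℂ) - (1 : Matrix m m ℂ) ⊗ₖ Bᵀ) (i, j) (i, j) =
      ((∑ a, ∑ b, Complex.normSq (hB.eigenvectorUnitary i a) *
        Complex.normSq (hB.eigenvectorUnitary j b) *
          f (hB.eigenvalues a - hB.eigenvalues b) : ℝ) : ℂ) := by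
  rw [hB.kronecker_one_sub_one_kronecker_transpose, cfc_unitary_mul_diagonal_mul_star,
    mul_diagonal_mul_star_apply_self, Fintype.sum_prod_type]
  simp [kroneckerConjEigenvectorUnitary, Complex.normSq_mul, mul_assoc]

end IsHermitian

end Matrix

theorem costOp_diagonal {n : ℕ} (p : ℝ) (d : Fin n → ℝ) :
    costOp p (diagonal fun i => (d i : ℂ)) =
      diagonal fun x : Fin n × Fin n => ((|d x.1 - d x.2| ^ p : ℝ) : ℂ) := by
  have h := cfc_unitary_mul_diagonal_mul_star 1 (fun x : Fin n × Fin n => d x.1 - d x.2)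
    (fun x => |x| ^ p)
  simp only [OneMemClass.coe_one, Matrix.one_mul, star_one, Matrix.mul_one] at h
  rw [costOp, diagonal_transpose, diagonal_kronecker_one_sub_one_kronecker_diagonal, ← h]
  push_cast
  rfl

theorem costOp_apply_self {n : ℕ} (p : ℝ) {B : Matrix (Fin n) (Fin n) ℂ} (hB : B.IsHermitian)
    (i j : Fin n) :
    costOp p B (i, j) (i, j) = (transportCost p
      (fun x a => Complex.normSq (hB.eigenvectorUnitary x a)) hB.eigenvalues i j : ℂ) :=
  hB.cfc_kronecker_one_sub_one_kronecker_transpose_apply_self _ i j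

/-- For `dim H ≥ 3` and `p < p'` with `p' > 1`, `C_p(H)` does not contain `C_{p'}(H)`:
some `p'`-cost operator is not a sum of `p`-cost operators. -/
theorem p_cost_not_superset {n : ℕ} (hn : 3 ≤ n) (p p' : ℝ)
    (hp : 0 < p) (hpp' : p < p') (hp'1 : 1 < p') :
    ∃ A : Matrix (Fin n) (Fin n) ℂ, A.IsHermitian ∧
      ¬ ∃ (K : ℕ) (B : Fin K → Matrix (Fin n) (Fin n) ℂ),
          (∀ k, (B k).IsHermitian) ∧
          costOp p' A = ∑ k, costOp p (B k) := by
  let c : Fin n → ℝ := fun i => min (i : ℝ) 2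
  refine ⟨diagonal fun i => (c i : ℂ), isHermitian_diagonal_of_self_adjoint _ ?_, ?_⟩
  · ext i
    simp
  rintro ⟨K, B, hB, hsum⟩
  let w k x a := Complex.normSq ((hB k).eigenvectorUnitary x a)
  let β k := (hB k).eigenvalues
  have hcost : ∀ i j, |c i - c j| ^ p' = ∑ k, transportCost p (w k) (β k) i j := by
    intro i j
    have h := congrFun (congrFun hsum (i, j)) (i, j)
    rw [costOp_diagonal, diagonal_apply_eq, Matrix.sum_apply] at h
    simp only [costOp_apply_self p (hB _)] at h
    exact_mod_cast h
  have htri := sum_transportCost_triangle hp w (fun _ _ _ => Complex.normSq_nonneg _)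
    (fun k => sum_normSq_apply_of_mem_unitaryGroup (hB k).eigenvectorUnitary.2) β
    (⟨0, by omega⟩ : Fin n) ⟨1, by omega⟩ ⟨2, by omega⟩
  rw [← hcost, ← hcost, ← hcost] at htri
  have hgt : (2 : ℝ) < ((2 : ℝ) ^ p') ^ (max p 1)⁻¹ := by
    have hq : 1 < p' * (max p 1)⁻¹ := by
      rw [← div_eq_mul_inv, one_lt_div (by positivity)]
      exact max_lt hpp' hp'1
    rw [← Real.rpow_mul zero_le_two]
    simpa using Real.rpow_lt_rpow_of_exponent_lt one_lt_two hq
  norm_num [c] at htri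
  linarith
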